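/- Let a < t be real numbers and let f : [a,t] → ℝ be continuous. Then the map d ↦ (1/Γ(d)) ∫_a^t (t − τ)^{d−1} f(τ) dτ is continuous on the open interval (0,1). -/

import Mathlib

/-!
`1/Γ` is continuous on `(0, ∞)`. For the integral, near an exponent `s₀ > -1` every kernel
`(t - τ)^s` with `p ≤ s ≤ s₀ + 1` is bounded by `(t - τ)^p + (t - τ)^(s₀ + 1)`, which is
integrable once `-1 < p < s₀`; since `f` is bounded on `[a, t]`, dominated convergence
gives continuity in `s`.
-/

open MeasureTheory Real Set Filter

lemma Real.rpow_le_rpow_add_rpow {x p q r : ℝ} (hx : 0 < x) (hpq : p ≤ q) (hqr : q ≤ r) :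
    x ^ q ≤ x ^ p + x ^ r := by
  rcases le_total x 1 with hx1 | hx1
  · have := rpow_le_rpow_of_exponent_ge hx hx1 hpq
    have := rpow_nonneg hx.le r
    linarith
  · have := rpow_le_rpow_of_exponent_le hx1 hqr
    have := rpow_nonneg hx.le p
    linarith

lemma intervalIntegrable_sub_rpow {r : ℝ} (hr : -1 < r) (a b c : ℝ) :
    IntervalIntegrable (fun x => (c - x) ^ r) volume a b := by
  simpa using
    (intervalIntegral.intervalIntegrable_rpow' (a := c - a) (b := c - b) hr).comp_sub_left c

theorem continuousOn_intervalIntegral_sub_rpow_mul {a t : ℝ} (hat : a ≤ t) {f : ℝ → ℝ}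
    (hf : ContinuousOn f (Icc a t)) :
    ContinuousOn (fun s : ℝ => ∫ τ in a..t, (t - τ) ^ s * f τ) (Ioi (-1)) := by
  obtain ⟨M, hM⟩ := isCompact_Icc.exists_bound_of_continuousOn hf
  have hfm : AEStronglyMeasurable f (volume.restrict (uIoc a t)) := by
    rw [uIoc_of_le hat]
    exact (hf.mono Ioc_subset_Icc_self).aestronglyMeasurable measurableSet_Ioc
  intro s₀ hs₀
  obtain ⟨p, hp, hps₀⟩ := exists_between (mem_Ioi.1 hs₀)
  refine ContinuousAt.continuousWithinAt <| intervalIntegral.continuousAt_of_dominated_interval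
    (bound := fun τ => ((t - τ) ^ p + (t - τ) ^ (s₀ + 1)) * M) ?meas ?bound ?integrable ?cont
  case meas =>
    exact .of_forall fun s => ((by fun_prop : Measurable fun τ : ℝ => (t - τ) ^ s)
      |>.aestronglyMeasurable.mul hfm)
  case bound =>
    filter_upwards [Ioo_mem_nhds hps₀ (lt_add_one s₀)] with s hs
    filter_upwards [volume.ae_ne t] with τ hτt hτ
    rw [uIoc_of_le hat] at hτ
    have hpos : 0 < t - τ := sub_pos.2 (hτ.2.lt_of_ne hτt)
    rw [norm_mul, norm_of_nonneg (rpow_nonneg hpos.le _)]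
    exact mul_le_mul (rpow_le_rpow_add_rpow hpos hs.1.le hs.2.le) (hM τ (Ioc_subset_Icc_self hτ))
      (norm_nonneg _) (by positivity)
  case integrable =>
    exact ((intervalIntegrable_sub_rpow hp a t t).add
      (intervalIntegrable_sub_rpow (by linarith) a t t)).mul_const M
  case cont =>
    filter_upwards [volume.ae_ne t] with τ hτt hτ
    rw [uIoc_of_le hat] at hτ
    exact (continuousAt_const_rpow (sub_pos.2 (hτ.2.lt_of_ne hτt)).ne').mul continuousAt_const

/-- For `a < t` and `f` continuous on `[a,t]`, the Riemann–Liouville fractional integral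
`d ↦ (1/Γ(d)) ∫_a^t (t − τ)^(d−1) f(τ) dτ` is continuous in the order `d` on `(0,1)`. -/
theorem stmt_4 (a t : ℝ) (hat : a < t) (f : ℝ → ℝ) (hf : ContinuousOn f (Icc a t)) :
    ContinuousOn (fun d : ℝ => (1 / Real.Gamma d) * ∫ τ in a..t, (t - τ) ^ (d - 1) * f τ)
      (Ioo (0:ℝ) 1) := by
  have hGamma : ContinuousOn (fun d => 1 / Gamma d) (Ioi 0) :=
    continuousOn_const.div differentiableOn_Gamma_Ioi.continuousOn
      fun _ hd => (Gamma_pos_of_pos hd).ne'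
  have hIntegral :
      ContinuousOn (fun d : ℝ => ∫ τ in a..t, (t - τ) ^ (d - 1) * f τ) (Ioi 0) :=
    (continuousOn_intervalIntegral_sub_rpow_mul hat.le hf).comp
      (continuousOn_id.sub continuousOn_const) fun d (hd : 0 < d) => show -1 < d - 1 by linarith
  exact (hGamma.mul hIntegral).mono Ioo_subset_Ioi_self
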